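/- arXiv:1306.3098 — 3 statements merged into one kernel-verified Lean document; each statement's English description precedes it below -/
import Mathlib

section
/- Let φ be a flow on a compact metric space (M,d). Assume there are compact invariant sets A_1,…,A_r and constants β_1,…,β_r > 0 and δ_1,…,δ_r > 0 such that for every i, every point x with d(x,A_i) < β_i and every neighborhood U of x, there exist y ∈ U and t ≥ 0 with d(φ_t(x),φ_t(y)) > δ_i. Assume further there are fixed points σ_1,…,σ_l and a constant ρ > 0 such that each σ_j is ρ-isolated and each stable set W^s(σ_j) has empty interior in M. If the union of the basins of A_1,…,A_r together with the stable sets W^s(σ_1),…,W^s(σ_l) is dense in M, then φ is sensitive to the initial conditions; more precisely, every δ > 0 satisfying δ < β_i/2 and δ ≤ δ_i for all i ∈ {1,…,r}, and δ ≤ ρ, is a sensitivity constant of φ. -/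
/-!
Pick `z ∈ U` in the dense union. Either the orbit of `z` separates from that of `x` by more
than `δ`, or it stays `δ`-close to it forever. In the latter case, if `z` lies in the basin of
`A i`, the orbit of `x` comes `β i`-close to `A i`, where sensitivity with constant `δ' i ≥ δ`
holds, and sensitivity pulls back along the flow. If instead `z ∈ W^s(σ j)`, the omega-limit
set of `x` lies in the `ρ`-ball around `σ j`, which by isolation forces `x ∈ W^s(σ j)`; since
`W^s(σ j)` has empty interior, some `w ∈ U` escapes it, and its omega-limit set leaves the
`ρ`-ball, so the orbit of `w` separates from that of `x` by more than `ρ ≥ δ`.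
-/

open Filter Topology

/-- The omega-limit set of a point `x` under a flow `φ`: the set of limits of
`φ (t k) x` along sequences `t k → ∞`. -/
def omegaLimitPt {M : Type*} [MetricSpace M] (φ : Flow ℝ M) (x : M) : Set M :=
  {y | ∃ t : ℕ → ℝ, Tendsto t atTop atTop ∧
    Tendsto (fun k => φ (t k) x) atTop (𝓝 y)}

/-- The basin of attraction of a set `B` under a flow `φ`. -/
def basin {M : Type*} [MetricSpace M] (φ : Flow ℝ M) (B : Set M) : Set M :=
  {x | omegaLimitPt φ x ⊆ B}

/-- The stable set of a point `σ` under a flow `φ`. -/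
def stableSet {M : Type*} [MetricSpace M] (φ : Flow ℝ M) (σ : M) : Set M :=
  {x | Tendsto (fun t : ℝ => φ t x) atTop (𝓝 σ)}

namespace Flow

variable {M : Type*} [MetricSpace M] (φ : Flow ℝ M)

def IsSensitiveAt (δ : ℝ) (x : M) : Prop :=
  ∀ U ∈ 𝓝 x, ∃ y ∈ U, ∃ t : ℝ, 0 ≤ t ∧ δ < dist (φ t x) (φ t y)

variable {φ}

theorem IsSensitiveAt.mono {δ δ' : ℝ} {x : M} (h : φ.IsSensitiveAt δ' x) (hδ : δ ≤ δ') :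
    φ.IsSensitiveAt δ x := fun U hU => by
  obtain ⟨y, hyU, t, ht, hlt⟩ := h U hU
  exact ⟨y, hyU, t, ht, hδ.trans_lt hlt⟩

theorem IsSensitiveAt.of_flow {δ T : ℝ} {x : M} (h : φ.IsSensitiveAt δ (φ T x)) (hT : 0 ≤ T) :
    φ.IsSensitiveAt δ x := fun U hU => by
  obtain ⟨_, ⟨y, hyU, rfl⟩, t, ht, hlt⟩ :=
    h _ ((φ.toHomeomorph T).isOpenMap.image_mem_nhds hU)
  refine ⟨y, hyU, t + T, add_nonneg ht hT, ?_⟩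
  simpa only [Flow.toHomeomorph_apply, φ.map_add] using hlt

theorem map_mem_omegaLimitPt {x p : M} (hp : p ∈ omegaLimitPt φ x) (s : ℝ) :
    φ s p ∈ omegaLimitPt φ x := by
  obtain ⟨t, ht, htx⟩ := hp
  refine ⟨fun k => s + t k, tendsto_atTop_add_const_left _ s ht, ?_⟩
  simpa only [Function.comp_def, φ.map_add] using ((φ.continuous_toFun s).tendsto p).comp htx

theorem dist_le_of_mem_omegaLimitPt {x p σ : M} {c : ℝ} (hp : p ∈ omegaLimitPt φ x)
    (h : ∀ᶠ t in atTop, dist (φ t x) σ ≤ c) : dist p σ ≤ c := by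
  obtain ⟨t, ht, htx⟩ := hp
  exact le_of_tendsto (htx.dist tendsto_const_nhds) (ht.eventually h)

variable [CompactSpace M]

theorem omegaLimitPt_nonempty (x : M) : (omegaLimitPt φ x).Nonempty := by
  obtain ⟨p, -, ψ, hψ, hconv⟩ :=
    isCompact_univ.tendsto_subseq (x := fun k : ℕ => φ (k : ℝ) x) fun _ => Set.mem_univ _
  exact ⟨p, fun k => (ψ k : ℝ), tendsto_natCast_atTop_atTop.comp hψ.tendsto_atTop, hconv⟩

theorem mem_stableSet_of_omegaLimitPt_subset {x σ : M}
    (h : omegaLimitPt φ x ⊆ {σ}) : x ∈ stableSet φ σ := by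
  change Tendsto (fun t : ℝ => φ t x) atTop (𝓝 σ)
  rw [Metric.tendsto_atTop]
  by_contra! hfar
  obtain ⟨ε, hε, hT⟩ := hfar
  choose t htk hdist using fun k : ℕ => hT k
  have ht : Tendsto t atTop atTop := tendsto_atTop_mono htk tendsto_natCast_atTop_atTop
  obtain ⟨p, -, ψ, hψ, hconv⟩ :=
    isCompact_univ.tendsto_subseq (x := fun k => φ (t k) x) fun _ => Set.mem_univ _
  have hp : p ∈ omegaLimitPt φ x := ⟨t ∘ ψ, ht.comp hψ.tendsto_atTop, hconv⟩
  have hεp : ε ≤ dist p σ :=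
    ge_of_tendsto (hconv.dist tendsto_const_nhds) (Eventually.of_forall fun k => hdist (ψ k))
  rw [h hp, dist_self] at hεp
  exact hεp.not_gt hε

/-- The omega-limit set is invariant, so if it stays in the `ρ`-ball it is the isolated
fixed point itself. -/
theorem mem_stableSet_of_omegaLimitPt_subset_closedBall {x σ : M} {ρ : ℝ}
    (hiso : ∀ y : M, (∀ t : ℝ, φ t y ∈ Metric.closedBall σ ρ) → y = σ)
    (hsub : omegaLimitPt φ x ⊆ Metric.closedBall σ ρ) :
    x ∈ stableSet φ σ :=
  mem_stableSet_of_omegaLimitPt_subset fun p hp =>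
    hiso p fun s => hsub (map_mem_omegaLimitPt hp s)

theorem exists_infDist_lt_of_mem_basin {A : Set M} {z : M} (hz : z ∈ basin φ A)
    {ε : ℝ} (hε : 0 < ε) : ∃ T : ℝ, 0 ≤ T ∧ Metric.infDist (φ T z) A < ε := by
  obtain ⟨p, hp⟩ := omegaLimitPt_nonempty (φ := φ) z
  have hpA : p ∈ A := hz hp
  obtain ⟨t, ht, htz⟩ := hp
  obtain ⟨k, hk0, hkε⟩ := ((ht.eventually_ge_atTop 0).and
    ((tendsto_iff_dist_tendsto_zero.mp htz).eventually (gt_mem_nhds hε))).exists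
  exact ⟨t k, hk0, (Metric.infDist_le_dist_of_mem hpA).trans_lt hkε⟩

theorem exists_infDist_lt_of_shadows_mem_basin {A : Set M} {x z : M} {δ β : ℝ}
    (hz : z ∈ basin φ A) (hxz : ∀ t : ℝ, 0 ≤ t → dist (φ t x) (φ t z) ≤ δ) (hδβ : δ < β) :
    ∃ T : ℝ, 0 ≤ T ∧ Metric.infDist (φ T x) A < β := by
  obtain ⟨T, hT, hTz⟩ := exists_infDist_lt_of_mem_basin hz (sub_pos.mpr hδβ)
  refine ⟨T, hT, ?_⟩
  calc Metric.infDist (φ T x) A ≤ Metric.infDist (φ T z) A + dist (φ T x) (φ T z) :=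
        Metric.infDist_le_infDist_add_dist
    _ < (β - δ) + δ := add_lt_add_of_lt_of_le hTz (hxz T hT)
    _ = β := sub_add_cancel β δ

theorem mem_stableSet_of_shadows_mem_stableSet {x z σ : M} {δ ρ : ℝ}
    (hiso : ∀ y : M, (∀ t : ℝ, φ t y ∈ Metric.closedBall σ ρ) → y = σ)
    (hz : z ∈ stableSet φ σ) (hxz : ∀ t : ℝ, 0 ≤ t → dist (φ t x) (φ t z) ≤ δ)
    (hδρ : δ ≤ ρ) : x ∈ stableSet φ σ := by
  refine mem_stableSet_of_omegaLimitPt_subset_closedBall hiso fun p hp => ?_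
  rw [Metric.mem_closedBall]
  refine le_of_forall_pos_le_add fun ε hε => ?_
  refine dist_le_of_mem_omegaLimitPt hp ?_
  filter_upwards [(tendsto_iff_dist_tendsto_zero.mp hz).eventually (gt_mem_nhds hε),
    eventually_ge_atTop 0] with t hzt ht
  calc dist (φ t x) σ ≤ dist (φ t x) (φ t z) + dist (φ t z) σ := dist_triangle _ _ _
    _ ≤ ρ + ε := add_le_add ((hxz t ht).trans hδρ) hzt.le

theorem exists_dist_gt_of_mem_stableSet_of_notMem {x w σ : M} {ρ : ℝ}
    (hiso : ∀ y : M, (∀ t : ℝ, φ t y ∈ Metric.closedBall σ ρ) → y = σ)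
    (hx : x ∈ stableSet φ σ) (hw : w ∉ stableSet φ σ) :
    ∃ t : ℝ, 0 ≤ t ∧ ρ < dist (φ t x) (φ t w) := by
  obtain ⟨p, ⟨t, ht, htw⟩, hpρ⟩ := Set.not_subset.mp
    fun hsub => hw (mem_stableSet_of_omegaLimitPt_subset_closedBall hiso hsub)
  rw [Metric.mem_closedBall, not_le] at hpρ
  have hgap : Tendsto (fun k => dist (φ (t k) w) σ - dist (φ (t k) x) σ) atTop
      (𝓝 (dist p σ - 0)) :=
    (htw.dist tendsto_const_nhds).sub (tendsto_iff_dist_tendsto_zero.mp (hx.comp ht))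
  obtain ⟨k, hkρ, hk0⟩ := ((hgap.eventually (lt_mem_nhds (show ρ < dist p σ - 0 by linarith))).and
    (ht.eventually_ge_atTop 0)).exists
  refine ⟨t k, hk0, ?_⟩
  linarith [dist_triangle_left (φ (t k) w) σ (φ (t k) x)]

end Flow

open Flow

theorem stmt0_general {M : Type*} [MetricSpace M] [CompactSpace M] (φ : Flow ℝ M)
    (r l : ℕ) (A : Fin r → Set M) (β δ' : Fin r → ℝ)
    (hβ : ∀ i, 0 < β i)
    (hsens : ∀ i, ∀ x : M, Metric.infDist x (A i) < β i →
      ∀ U ∈ 𝓝 x, ∃ y ∈ U, ∃ t : ℝ, 0 ≤ t ∧ δ' i < dist (φ t x) (φ t y))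
    (σ : Fin l → M)
    (ρ : ℝ)
    (hiso : ∀ j, ∀ x : M,
      (∀ t : ℝ, φ t x ∈ Metric.closedBall (σ j) ρ) → x = σ j)
    (hint : ∀ j, interior (stableSet φ (σ j)) = ∅)
    (hdense : Dense ((⋃ i, basin φ (A i)) ∪ ⋃ j, stableSet φ (σ j)))
    (δ : ℝ)
    (hδβ : ∀ i, δ < β i / 2) (hδδ' : ∀ i, δ ≤ δ' i) (hδρ : δ ≤ ρ) :
    ∀ x : M, ∀ U ∈ 𝓝 x, ∃ y ∈ U, ∃ t : ℝ, 0 ≤ t ∧ δ < dist (φ t x) (φ t y) := by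
  intro x U hU
  have hxU : x ∈ interior U := mem_interior_iff_mem_nhds.mpr hU
  obtain ⟨z, hz, hzU⟩ := hdense.exists_mem_open isOpen_interior ⟨x, hxU⟩
  by_cases hsep : ∃ t : ℝ, 0 ≤ t ∧ δ < dist (φ t x) (φ t z)
  · exact ⟨z, interior_subset hzU, hsep⟩
  push Not at hsep
  rcases hz with hz | hz
  · obtain ⟨i, hz⟩ := Set.mem_iUnion.mp hz
    obtain ⟨T, hT, hTA⟩ := exists_infDist_lt_of_shadows_mem_basin hz hsep
      ((hδβ i).trans (half_lt_self (hβ i)))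
    exact (IsSensitiveAt.mono (hsens i _ hTA) (hδδ' i)).of_flow hT U hU
  · obtain ⟨j, hz⟩ := Set.mem_iUnion.mp hz
    have hx := mem_stableSet_of_shadows_mem_stableSet (hiso j) hz hsep hδρ
    obtain ⟨w, hwU, hw⟩ : ∃ w ∈ U, w ∉ stableSet φ (σ j) := Set.not_subset.mp fun hsub =>
      Set.notMem_empty x (hint j ▸ interior_mono hsub hxU)
    obtain ⟨t, ht, hlt⟩ := exists_dist_gt_of_mem_stableSet_of_notMem (hiso j) hx hw
    exact ⟨w, hwU, t, ht, hδρ.trans_lt hlt⟩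

/-- Let `φ` be a flow on a compact metric space `M`. Given compact
invariant sets `A 1, …, A r` with constants `β i, δ' i > 0` such that every point
`β i`-close to `A i` is a sensitive point with constant `δ' i`, and `ρ`-isolated
fixed points `σ 1, …, σ l` whose stable sets have empty interior, such that the
union of the basins of the `A i` and the stable sets of the `σ j` is dense in `M`,
then every `δ > 0` with `δ < β i / 2`, `δ ≤ δ' i` for all `i` and `δ ≤ ρ` is a
sensitivity constant of `φ`. -/
theorem stmt0 {M : Type*} [MetricSpace M] [CompactSpace M] (φ : Flow ℝ M)
    (r l : ℕ) (A : Fin r → Set M) (β δ' : Fin r → ℝ)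
    (hAcomp : ∀ i, IsCompact (A i))
    (hAinv : ∀ i, ∀ t : ℝ, φ t '' A i = A i)
    (hβ : ∀ i, 0 < β i) (hδ' : ∀ i, 0 < δ' i)
    (hsens : ∀ i, ∀ x : M, Metric.infDist x (A i) < β i →
      ∀ U ∈ 𝓝 x, ∃ y ∈ U, ∃ t : ℝ, 0 ≤ t ∧ δ' i < dist (φ t x) (φ t y))
    (σ : Fin l → M) (hfix : ∀ j, ∀ t : ℝ, φ t (σ j) = σ j)
    (ρ : ℝ) (hρ : 0 < ρ)
    (hiso : ∀ j, ∀ x : M,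
      (∀ t : ℝ, φ t x ∈ Metric.closedBall (σ j) ρ) → x = σ j)
    (hint : ∀ j, interior (stableSet φ (σ j)) = ∅)
    (hdense : Dense ((⋃ i, basin φ (A i)) ∪ ⋃ j, stableSet φ (σ j)))
    (δ : ℝ) (hδpos : 0 < δ)
    (hδβ : ∀ i, δ < β i / 2) (hδδ' : ∀ i, δ ≤ δ' i) (hδρ : δ ≤ ρ) :
    ∀ x : M, ∀ U ∈ 𝓝 x, ∃ y ∈ U, ∃ t : ℝ, 0 ≤ t ∧ δ < dist (φ t x) (φ t y) :=
  stmt0_general φ r l A β δ' hβ hsens σ ρ hiso hint hdense δ hδβ hδδ' hδρ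
end

section
/- Let φ be a flow on a compact metric space (M,d), let σ be a fixed point of φ, and let ρ > 0 be such that σ is ρ-isolated, i.e., the only point whose full orbit {φ_t(x) : t ∈ ℝ} is contained in the closed ball of radius ρ around σ is σ itself. If x, y ∈ M satisfy d(φ_t(x),φ_t(y)) ≤ ρ for all t ≥ 0 and φ_t(y) → σ as t → ∞, then φ_t(x) → σ as t → ∞; that is, x belongs to the stable set W^s(σ). -/
open Filter Topology

/-!
Every ω-limit point `z` of `x` has its whole orbit in the ω-limit set of `x`, and every such
point lies within `ρ` of `σ`, because the forward orbit of `x` stays `ρ`-close to that of `y`,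
which converges to `σ`. Isolation of `σ` then forces `z = σ`, so `σ` is the only cluster point
of the forward orbit of `x`; by compactness the orbit converges to `σ`.
-/

theorem MapClusterPt.dist_le_of_tendsto {ι X : Type*} [PseudoMetricSpace X] {l : Filter ι}
    {u v : ι → X} {z σ : X} {ρ : ℝ} (hz : MapClusterPt z l u) (hv : Tendsto v l (𝓝 σ))
    (huv : ∀ᶠ i in l, dist (u i) (v i) ≤ ρ) : dist z σ ≤ ρ := by
  refine le_of_forall_pos_le_add fun ε hε => ?_
  refine Metric.isClosed_closedBall.mem_of_mapClusterPt hz ?_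
  filter_upwards [huv, Metric.tendsto_nhds.1 hv ε hε] with i hi hvi
  exact (dist_triangle _ (v i) σ).trans (by linarith)

theorem MapClusterPt.flow_apply {τ α : Type*} [TopologicalSpace τ] [AddMonoid τ]
    [ContinuousAdd τ] [TopologicalSpace α] {ϕ : Flow τ α} {f : Filter τ} {x z : α} (t : τ)
    (ht : Tendsto (t + ·) f f) (hz : MapClusterPt z f (fun s => ϕ s x)) :
    MapClusterPt (ϕ t z) f (fun s => ϕ s x) := by
  refine MapClusterPt.of_comp ht ?_
  simpa only [Function.comp_def, Flow.map_add] using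
    hz.continuousAt_comp (ϕ.continuous_toFun t).continuousAt

theorem stmt1_general {M : Type*} [MetricSpace M] [CompactSpace M] (φ : Flow ℝ M)
    (σ : M) (ρ : ℝ)
    (hiso : ∀ x : M, (∀ t : ℝ, φ t x ∈ Metric.closedBall σ ρ) → x = σ)
    (x y : M)
    (hclose : ∀ t : ℝ, 0 ≤ t → dist (φ t x) (φ t y) ≤ ρ)
    (hy : Tendsto (fun t : ℝ => φ t y) atTop (𝓝 σ)) :
    Tendsto (fun t : ℝ => φ t x) atTop (𝓝 σ) :=
  tendsto_nhds_of_unique_mapClusterPt fun z hz => hiso z fun t =>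
    (hz.flow_apply t (tendsto_atTop_add_const_left atTop t tendsto_id)).dist_le_of_tendsto hy
      ((eventually_ge_atTop 0).mono hclose)

/-- If `σ` is a `ρ`-isolated fixed point of a flow `φ` on a compact
metric space, `d(φ_t x, φ_t y) ≤ ρ` for all `t ≥ 0`, and `φ_t y → σ`, then
`φ_t x → σ`, i.e. `x ∈ W^s(σ)`. -/
theorem stmt1 {M : Type*} [MetricSpace M] [CompactSpace M] (φ : Flow ℝ M)
    (σ : M) (hfix : ∀ t : ℝ, φ t σ = σ) (ρ : ℝ) (hρ : 0 < ρ)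
    (hiso : ∀ x : M, (∀ t : ℝ, φ t x ∈ Metric.closedBall σ ρ) → x = σ)
    (x y : M)
    (hclose : ∀ t : ℝ, 0 ≤ t → dist (φ t x) (φ t y) ≤ ρ)
    (hy : Tendsto (fun t : ℝ => φ t y) atTop (𝓝 σ)) :
    Tendsto (fun t : ℝ => φ t x) atTop (𝓝 σ) :=
  stmt1_general φ σ ρ hiso x y hclose hy
end

section
/- Let φ be a flow on a compact metric space (M,d), let σ be a fixed point of φ that is ρ-isolated for some ρ > 0, and suppose the stable set W^s(σ) has empty interior in M. Then every point of W^s(σ) is a sensitive point with constant ρ: for every x ∈ W^s(σ) and every neighborhood U of x there exist y ∈ U and t ≥ 0 such that d(φ_t(x),φ_t(y)) > ρ. -/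
/-!
If the forward orbit of some `y` stayed `ρ`-close to that of `x ∈ W^s(σ)`, the ω-limit set of `y`
would be an invariant set inside the closed `ρ`-ball around `σ`, hence `{σ}` by isolation; by
compactness `y` would then lie in `W^s(σ)`. But `W^s(σ)` has empty interior, so every
neighbourhood of `x` contains such a `y` outside it.
-/

open Filter Topology Set omegaLimit

theorem dist_le_of_mapClusterPt_of_tendsto {τ β : Type*} [PseudoMetricSpace β] {f : Filter τ}
    {u v : τ → β} {σ w : β} {ρ : ℝ} (hu : Tendsto u f (𝓝 σ)) (hw : MapClusterPt w f v)
    (huv : ∀ᶠ t in f, dist (u t) (v t) ≤ ρ) : dist w σ ≤ ρ := by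
  obtain ⟨U, hUf, hvU⟩ := mapClusterPt_iff_ultrafilter.1 hw
  rw [dist_comm]
  exact le_of_tendsto ((hu.mono_left hUf).dist hvU) (huv.filter_mono hUf)

theorem omegaLimit_subset_closedBall {τ α β : Type*} [PseudoMetricSpace β] {f : Filter τ}
    {ϕ : τ → α → β} {x y : α} {σ : β} {ρ : ℝ} (hx : Tendsto (fun t ↦ ϕ t x) f (𝓝 σ))
    (hxy : ∀ᶠ t in f, dist (ϕ t x) (ϕ t y) ≤ ρ) : ω f ϕ {y} ⊆ Metric.closedBall σ ρ :=
  fun _ hw ↦ dist_le_of_mapClusterPt_of_tendsto hx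
    ((mem_omegaLimit_singleton_iff_mapClusterPt f ϕ y _).1 hw) hxy

theorem tendsto_of_omegaLimit_subset_singleton {τ α β : Type*} [TopologicalSpace β]
    [CompactSpace β] {f : Filter τ} {ϕ : τ → α → β} {x : α} {σ : β} (h : ω f ϕ {x} ⊆ {σ}) :
    Tendsto (fun t ↦ ϕ t x) f (𝓝 σ) := by
  refine (nhds_basis_opens σ).tendsto_right_iff.2 fun v ⟨hσv, hv⟩ ↦ ?_
  filter_upwards [eventually_mapsTo_of_isOpen_of_omegaLimit_subset f ϕ {x} hv
    (h.trans (singleton_subset_iff.2 hσv))] with t ht using ht rfl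

theorem stmt2_general {M : Type*} [MetricSpace M] [CompactSpace M] (φ : Flow ℝ M)
    (σ : M) (ρ : ℝ)
    (hiso : ∀ x : M, (∀ t : ℝ, φ t x ∈ Metric.closedBall σ ρ) → x = σ)
    (hint : interior (stableSet φ σ) = ∅) :
    ∀ x ∈ stableSet φ σ, ∀ U ∈ 𝓝 x,
      ∃ y ∈ U, ∃ t : ℝ, 0 ≤ t ∧ ρ < dist (φ t x) (φ t y) := by
  intro x hx U hU
  obtain ⟨y, hy, hyU⟩ := (interior_eq_empty_iff_dense_compl.1 hint).inter_nhds_nonempty hU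
  by_contra! hclose
  have hball : ω⁺ φ {y} ⊆ Metric.closedBall σ ρ :=
    omegaLimit_subset_closedBall hx
      (eventually_ge_atTop 0 |>.mono fun t ht ↦ hclose y hyU t ht)
  have hinv : IsInvariant φ (ω⁺ φ {y}) :=
    φ.isInvariant_omegaLimit atTop {y} fun t ↦ tendsto_atTop_add_const_left _ t tendsto_id
  exact hy (tendsto_of_omegaLimit_subset_singleton fun w hw ↦ hiso w fun t ↦ hball (hinv t hw))

/-- If `σ` is a `ρ`-isolated fixed point of a flow `φ` on a compact
metric space whose stable set has empty interior, then every point of `W^s(σ)`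
is a sensitive point with constant `ρ`. -/
theorem stmt2 {M : Type*} [MetricSpace M] [CompactSpace M] (φ : Flow ℝ M)
    (σ : M) (hfix : ∀ t : ℝ, φ t σ = σ) (ρ : ℝ) (hρ : 0 < ρ)
    (hiso : ∀ x : M, (∀ t : ℝ, φ t x ∈ Metric.closedBall σ ρ) → x = σ)
    (hint : interior (stableSet φ σ) = ∅) :
    ∀ x ∈ stableSet φ σ, ∀ U ∈ 𝓝 x,
      ∃ y ∈ U, ∃ t : ℝ, 0 ≤ t ∧ ρ < dist (φ t x) (φ t y) :=
  stmt2_general φ σ ρ hiso hint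
end
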